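/- arXiv:2501.15569 — 4 statements merged into one kernel-verified Lean document; each statement's English description precedes it below -/
import Mathlib

section
/- Let A be a graded ring and F a t-filter on A. If I and J are homogeneous two-sided ideals of A that belong to F (regarded as homogeneous right ideals), then the product ideal I·J (the additive span of the products x·y with x ∈ I and y ∈ J) also belongs to F. (Proposition 2.3(1).) -/
/-!
The products `x * y` with `x ∈ I`, `y ∈ J` span a homogeneous right ideal `I·J`. By (T3) applied
with `I`, it suffices that `(I·J : a) ∈ F` for each homogeneous `a ∈ I`; this colon ideal is a
homogeneous right ideal containing `J ∈ F`, and a t-filter is closed under enlarging its members,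
since `(𝔟 : a) = A` whenever `a ∈ 𝔟`.
-/

/-- `I ⊆ A` is a right ideal (as a set): an additive subgroup closed under right
multiplication by arbitrary elements. -/
def IsRightIdealSet {A : Type*} [Ring A] (I : Set A) : Prop :=
  (0 : A) ∈ I ∧ (∀ x ∈ I, ∀ y ∈ I, x + y ∈ I) ∧ (∀ x ∈ I, -x ∈ I) ∧
    ∀ x ∈ I, ∀ a : A, x * a ∈ I

/-- `I ⊆ A` is a two-sided ideal (as a set). -/
def IsTwoSidedIdealSet {A : Type*} [Ring A] (I : Set A) : Prop :=
  IsRightIdealSet I ∧ ∀ x ∈ I, ∀ a : A, a * x ∈ I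

/-- A subset of a graded ring is homogeneous if it contains all homogeneous
components of each of its elements. -/
def SetIsHomogeneous {A : Type*} [Ring A] (𝒜 : ℕ → AddSubgroup A) [GradedRing 𝒜]
    (I : Set A) : Prop :=
  ∀ x ∈ I, ∀ n : ℕ, ((DirectSum.decompose 𝒜 x n : 𝒜 n) : A) ∈ I

/-- `a` is a homogeneous element of the graded ring `A`. -/
def IsHomogeneousElem {A : Type*} [Ring A] (𝒜 : ℕ → AddSubgroup A) [GradedRing 𝒜]
    (a : A) : Prop :=
  ∃ n : ℕ, a ∈ 𝒜 n

/-- A t-filter on a graded ring `A`: a collection of homogeneous right ideals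
satisfying T1, T2, T3. -/
structure IsTFilter {A : Type*} [Ring A] (𝒜 : ℕ → AddSubgroup A) [GradedRing 𝒜]
    (F : Set (Set A)) : Prop where
  mem_ideal : ∀ I ∈ F, IsRightIdealSet I ∧ SetIsHomogeneous 𝒜 I
  univ_mem : (Set.univ : Set A) ∈ F
  colon_mem : ∀ I ∈ F, ∀ a : A, IsHomogeneousElem 𝒜 a → {x : A | a * x ∈ I} ∈ F
  saturated : ∀ I ∈ F, ∀ J : Set A, IsRightIdealSet J → SetIsHomogeneous 𝒜 J →
    (∀ a ∈ I, IsHomogeneousElem 𝒜 a → {x : A | a * x ∈ J} ∈ F) → J ∈ F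

/-- The product `I·J` of two subsets of `A`: the additive span of the products
`x * y` with `x ∈ I`, `y ∈ J`. -/
def setIdealMul {A : Type*} [Ring A] (I J : Set A) : Set A :=
  (AddSubgroup.closure {z : A | ∃ x ∈ I, ∃ y ∈ J, z = x * y} : AddSubgroup A)

section

variable {A : Type*} [Ring A]

theorem isRightIdealSet_addSubgroup (P : AddSubgroup A) (hP : ∀ x ∈ P, ∀ a : A, x * a ∈ P) :
    IsRightIdealSet (P : Set A) :=
  ⟨P.zero_mem, fun _ hx _ hy => P.add_mem hx hy, fun _ hx => P.neg_mem hx, hP⟩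

theorem mul_mem_setIdealMul {I J : Set A} {x y : A} (hx : x ∈ I) (hy : y ∈ J) :
    x * y ∈ setIdealMul I J :=
  AddSubgroup.subset_closure ⟨x, hx, y, hy, rfl⟩

theorem isRightIdealSet_setIdealMul (I : Set A) {J : Set A}
    (hJ : ∀ y ∈ J, ∀ a : A, y * a ∈ J) : IsRightIdealSet (setIdealMul I J) := by
  refine isRightIdealSet_addSubgroup _ fun z hz a => ?_
  induction hz using AddSubgroup.closure_induction with
  | mem _ hxy =>
    obtain ⟨x, hx, y, hy, rfl⟩ := hxy
    rw [mul_assoc]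
    exact mul_mem_setIdealMul hx (hJ y hy a)
  | zero => simpa only [zero_mul] using AddSubgroup.zero_mem _
  | add _ _ _ _ hx hy => simpa only [add_mul] using AddSubgroup.add_mem _ hx hy
  | neg _ _ hx => simpa only [neg_mul] using AddSubgroup.neg_mem _ hx

theorem isRightIdealSet_colon {L : Set A} (hL : IsRightIdealSet L) (a : A) :
    IsRightIdealSet {x : A | a * x ∈ L} := by
  obtain ⟨hzero, hadd, hneg, hmul⟩ := hL
  refine ⟨?_, fun x hx y hy => ?_, fun x hx => ?_, fun x hx b => ?_⟩
  · simpa only [Set.mem_ofPred_eq, mul_zero] using hzero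
  · simpa only [Set.mem_ofPred_eq, mul_add] using hadd _ hx _ hy
  · simpa only [Set.mem_ofPred_eq, mul_neg] using hneg _ hx
  · simpa only [Set.mem_ofPred_eq, mul_assoc] using hmul _ hx b

end

section Graded

variable {A : Type*} [Ring A] {𝒜 : ℕ → AddSubgroup A} [GradedRing 𝒜]

theorem setIsHomogeneous_closure {S : Set A}
    (hS : ∀ s ∈ S, ∀ n : ℕ, ((DirectSum.decompose 𝒜 s n : 𝒜 n) : A) ∈ AddSubgroup.closure S) :
    SetIsHomogeneous 𝒜 (AddSubgroup.closure S : Set A) := by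
  intro z hz
  induction hz using AddSubgroup.closure_induction with
  | mem s hs => exact hS s hs
  | zero => simp
  | add _ _ _ _ hx hy => simpa using fun n => AddSubgroup.add_mem _ (hx n) (hy n)
  | neg _ _ hx =>
    intro n
    rw [DirectSum.decompose_neg, DFinsupp.neg_apply, NegMemClass.coe_neg]
    exact AddSubgroup.neg_mem _ (hx n)

theorem setIsHomogeneous_setIdealMul {I J : Set A} (hI : SetIsHomogeneous 𝒜 I)
    (hJ : SetIsHomogeneous 𝒜 J) : SetIsHomogeneous 𝒜 (setIdealMul I J) := by
  classical
  refine setIsHomogeneous_closure ?_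
  rintro _ ⟨x, hx, y, hy, rfl⟩ n
  rw [DirectSum.decompose_mul, DirectSum.coe_mul_apply]
  exact AddSubgroup.sum_mem _ fun ij _ => mul_mem_setIdealMul (hI x hx ij.1) (hJ y hy ij.2)

theorem setIsHomogeneous_colon {L : Set A} (hL : SetIsHomogeneous 𝒜 L) {a : A} {m : ℕ}
    (ha : a ∈ 𝒜 m) : SetIsHomogeneous 𝒜 {x : A | a * x ∈ L} := fun x hx n => by
  simpa only [Set.mem_ofPred_eq, DirectSum.coe_decompose_mul_add_of_left_mem 𝒜 ha]
    using hL _ hx (m + n)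

theorem IsTFilter.mem_of_subset {F : Set (Set A)} (hF : IsTFilter 𝒜 F) {K L : Set A}
    (hK : K ∈ F) (hL : IsRightIdealSet L) (hLhom : SetIsHomogeneous 𝒜 L) (hKL : K ⊆ L) :
    L ∈ F := by
  refine hF.saturated K hK L hL hLhom fun a ha _ => ?_
  have hcolon : {x : A | a * x ∈ L} = Set.univ :=
    Set.eq_univ_of_forall fun x => hL.2.2.2 a (hKL ha) x
  exact hcolon ▸ hF.univ_mem

end Graded

theorem tFilter_mem_setIdealMul_general {A : Type*} [Ring A] (𝒜 : ℕ → AddSubgroup A)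
    [GradedRing 𝒜] (F : Set (Set A)) (hF : IsTFilter 𝒜 F) (I J : Set A)
    (hIF : I ∈ F) (hJF : J ∈ F) :
    setIdealMul I J ∈ F := by
  have hIhom : SetIsHomogeneous 𝒜 I := (hF.mem_ideal I hIF).2
  obtain ⟨hJ, hJhom⟩ := hF.mem_ideal J hJF
  have hIJ : IsRightIdealSet (setIdealMul I J) := isRightIdealSet_setIdealMul I hJ.2.2.2
  have hIJhom : SetIsHomogeneous 𝒜 (setIdealMul I J) := setIsHomogeneous_setIdealMul hIhom hJhom
  refine hF.saturated I hIF _ hIJ hIJhom fun a ha ⟨m, ham⟩ => ?_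
  exact hF.mem_of_subset hJF (isRightIdealSet_colon hIJ a) (setIsHomogeneous_colon hIJhom ham)
    fun y hy => mul_mem_setIdealMul ha hy

/-- Proposition 2.3(1). -/
theorem tFilter_mem_setIdealMul {A : Type*} [Ring A] (𝒜 : ℕ → AddSubgroup A)
    [GradedRing 𝒜] (F : Set (Set A)) (hF : IsTFilter 𝒜 F) (I J : Set A)
    (hI : IsTwoSidedIdealSet I) (hIhom : SetIsHomogeneous 𝒜 I)
    (hJ : IsTwoSidedIdealSet J) (hJhom : SetIsHomogeneous 𝒜 J)
    (hIF : I ∈ F) (hJF : J ∈ F) :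
    setIdealMul I J ∈ F :=
  tFilter_mem_setIdealMul_general 𝒜 F hF I J hIF hJF
end

section
/- Let C be a closed symmetric monoidal Grothendieck abelian category with a family {g_i}_{i∈I} of generators each of which is strongly dualizable. Then for each i the internal-hom functor [g_i, −] : C → C preserves filtered colimits (each g_i is enriched finitely presented, so C is enriched locally finitely presented). If moreover the monoidal unit 𝟙 is finitely presented (the functor Hom_C(𝟙, −) preserves filtered colimits), then each g_i is finitely presented, i.e. Hom_C(g_i, −) preserves filtered colimits. (Lemma 5.11 and Corollary from it.) -/
/-!
If `d` is a dual of `g`, then `g ⊗ −` has both `[g, −]` and `d ⊗ −` as right adjoints, so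
`[g, −] ≅ d ⊗ −` is itself a left adjoint and preserves all colimits. Since
`Hom(g, −) ≅ Hom(𝟙, [g, −])`, finite presentability of `𝟙` then passes to `g`.
-/

open CategoryTheory MonoidalCategory MonoidalClosed Limits Opposite

namespace CategoryTheory.MonoidalClosed

variable {C : Type*} [Category C] [MonoidalCategory C]

def ihomIsoTensorLeftOfExactPairing (X Y : C) [ExactPairing Y X] [Closed X] :
    ihom X ≅ tensorLeft Y :=
  (ihom.adjunction X).rightAdjointUniq (tensorLeftAdjunction Y X)

theorem preservesColimits_ihom_of_exactPairing (X Y : C) [ExactPairing Y X] [Closed X]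
    [Closed Y] : PreservesColimits (ihom X) :=
  have := (ihom.adjunction Y).leftAdjoint_preservesColimits
  preservesColimits_of_natIso (ihomIsoTensorLeftOfExactPairing X Y).symm

def ihomCompCoyonedaUnitIso (X : C) [Closed X] :
    ihom X ⋙ coyoneda.obj (op (𝟙_ C)) ≅ coyoneda.obj (op X) :=
  NatIso.ofComponents (fun _ => curryHomEquiv'.symm.toIso) fun f => by
    ext g
    simp [uncurry', uncurry_natural_right]

theorem preservesFilteredColimits_coyoneda_of_ihom (X : C) [Closed X]
    [PreservesFilteredColimits (ihom X)]
    [PreservesFilteredColimits (coyoneda.obj (op (𝟙_ C)))] :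
    PreservesFilteredColimits (coyoneda.obj (op X)) :=
  ⟨fun _ _ _ => preservesColimitsOfShape_of_natIso (ihomCompCoyonedaUnitIso X)⟩

end CategoryTheory.MonoidalClosed

theorem enriched_locally_finitely_presented_general {C : Type*} [Category C]
    [MonoidalCategory C] [MonoidalClosed C]
    {I : Type*} (g : I → C)
    (hdual : ∀ i, ∃ d : C, Nonempty (ExactPairing d (g i))) :
    (∀ i, PreservesFilteredColimits (ihom (g i))) ∧
      (PreservesFilteredColimits (coyoneda.obj (op (𝟙_ C))) →
        ∀ i, PreservesFilteredColimits (coyoneda.obj (op (g i)))) := by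
  have hihom (i : I) : PreservesFilteredColimits (ihom (g i)) := by
    obtain ⟨d, ⟨_⟩⟩ := hdual i
    have := preservesColimits_ihom_of_exactPairing (g i) d
    infer_instance
  refine ⟨hihom, fun _ i => ?_⟩
  have := hihom i
  exact preservesFilteredColimits_coyoneda_of_ihom (g i)

theorem enriched_locally_finitely_presented {C : Type*} [Category C]
    [MonoidalCategory C] [SymmetricCategory C] [MonoidalClosed C]
    [Abelian C] [HasColimits C] [HasFilteredColimits C] [AB5 C]
    {I : Type*} (g : I → C) (hgen : ObjectProperty.IsSeparating (Set.range g))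
    (hdual : ∀ i, ∃ d : C, Nonempty (ExactPairing d (g i))) :
    (∀ i, PreservesFilteredColimits (ihom (g i))) ∧
      (PreservesFilteredColimits (coyoneda.obj (op (𝟙_ C))) →
        ∀ i, PreservesFilteredColimits (coyoneda.obj (op (g i)))) :=
  enriched_locally_finitely_presented_general g hdual
end

section
/- Let 𝒜 be a graded algebra structure on a commutative ring A. Then every non-empty irreducible closed subset of ProjectiveSpectrum 𝒜 has a generic point (a point whose closure is the whole subset); that is, ProjectiveSpectrum 𝒜 is a quasi-sober topological space. (Lemma 7.10 in the commutative case.) -/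
/-!
The vanishing ideal of an irreducible set `t` of relevant homogeneous primes is again a relevant
homogeneous prime: prime because `t` cannot be covered by the two closed sets `V(f)` and `V(g)`
unless it lies in one of them, relevant because it is contained in a point of `t`. As
`V(I(t)) = closure t`, it is a generic point of `t` when `t` is closed.
-/

namespace ProjectiveSpectrum

variable {A σ : Type*} [CommRing A] [SetLike σ A] [AddSubmonoidClass σ A]
  {𝒜 : ℕ → σ} [GradedRing 𝒜]

theorem vanishingIdeal_le_of_mem {t : Set (ProjectiveSpectrum 𝒜)} {x : ProjectiveSpectrum 𝒜}
    (hx : x ∈ t) : vanishingIdeal t ≤ x.asHomogeneousIdeal := by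
  simpa only [vanishingIdeal_singleton] using
    vanishingIdeal_anti_mono 𝒜 (Set.singleton_subset_iff.mpr hx)

theorem isPrime_vanishingIdeal_of_isIrreducible {t : Set (ProjectiveSpectrum 𝒜)}
    (ht : IsIrreducible t) : (vanishingIdeal t).toIdeal.IsPrime := by
  obtain ⟨x, hx⟩ := ht.nonempty
  refine ⟨fun htop => x.isPrime.ne_top (top_le_iff.mp (htop ▸ vanishingIdeal_le_of_mem hx)), ?_⟩
  intro f g hfg
  have hcover : t ⊆ zeroLocus 𝒜 {f} ∪ zeroLocus 𝒜 {g} := by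
    rw [← zeroLocus_singleton_mul, subset_zeroLocus_iff_subset_vanishingIdeal,
      Set.singleton_subset_iff]
    exact hfg
  have mem_of_subset (a : A) (h : t ⊆ zeroLocus 𝒜 {a}) : a ∈ vanishingIdeal t :=
    (subset_zeroLocus_iff_subset_vanishingIdeal 𝒜 t {a}).mp h rfl
  exact (isPreirreducible_iff_isClosed_union_isClosed.mp ht.isPreirreducible _ _
    (isClosed_zeroLocus 𝒜 {f}) (isClosed_zeroLocus 𝒜 {g}) hcover).imp
    (mem_of_subset f) (mem_of_subset g)

def ofIsIrreducible {t : Set (ProjectiveSpectrum 𝒜)} (ht : IsIrreducible t) :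
    ProjectiveSpectrum 𝒜 where
  asHomogeneousIdeal := vanishingIdeal t
  isPrime := isPrime_vanishingIdeal_of_isIrreducible ht
  not_irrelevant_le h :=
    ht.nonempty.some.not_irrelevant_le (h.trans (vanishingIdeal_le_of_mem ht.nonempty.some_mem))

theorem isGenericPoint_ofIsIrreducible {t : Set (ProjectiveSpectrum 𝒜)} (ht : IsIrreducible t)
    (hc : IsClosed t) : IsGenericPoint (ofIsIrreducible ht) t := by
  rw [IsGenericPoint, ← zeroLocus_vanishingIdeal_eq_closure, vanishingIdeal_singleton]
  exact (zeroLocus_vanishingIdeal_eq_closure 𝒜 t).trans hc.closure_eq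

end ProjectiveSpectrum

theorem projectiveSpectrum_quasiSober {R A : Type*}
    [CommRing R] [CommRing A] [Algebra R A]
    (𝒜 : ℕ → Submodule R A) [GradedAlgebra 𝒜] :
    QuasiSober (ProjectiveSpectrum 𝒜) :=
  ⟨fun ht hc => ⟨_, ProjectiveSpectrum.isGenericPoint_ofIsIrreducible ht hc⟩⟩
end

section
/- Let 𝒜 be a graded algebra structure on a commutative ring A. If the irrelevant ideal A_+ is finitely generated, then ProjectiveSpectrum 𝒜 is a spectral space: it is T0 and quasi-compact, its quasi-compact open subsets are closed under finite intersections and form a basis of the topology, and every non-empty irreducible closed subset has a generic point. (Theorem 7.12 in the commutative case, where, by Theorem 7.13, the paper's symmetric projective scheme Proj^Σ coincides with the classical Proj.) -/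
/-!
`Proj 𝒜` is a scheme, so its underlying space is T0, quasi-sober and has a basis of compact
opens; being separated, it is also quasi-separated. Compactness is where finite generation
enters: finitely many homogeneous generators `f` of positive degree of `A₊` give finitely many
basic opens `D₊(f)` covering `Proj 𝒜`, and each `D₊(f)` is compact, being the image of
`Spec A_(f)`.
-/

namespace HomogeneousIdeal

variable {ι R A : Type*} [AddCommMonoid ι] [PartialOrder ι] [CanonicallyOrderedAdd ι]
  [DecidableEq ι] [CommRing R] [CommRing A] [Algebra R A]
  (𝒜 : ι → Submodule R A) [GradedAlgebra 𝒜]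

theorem toIdeal_irrelevant_eq_span_setOf :
    (irrelevant 𝒜).toIdeal = Ideal.span {x : A | ∃ i, 0 < i ∧ x ∈ 𝒜 i} := by
  rw [irrelevant_eq_span]
  congr 1
  ext x
  simp

end HomogeneousIdeal

namespace AlgebraicGeometry.Proj

variable {R A : Type*} [CommRing R] [CommRing A] [Algebra R A]
  (𝒜 : ℕ → Submodule R A) [GradedAlgebra 𝒜]

theorem isCompact_basicOpen {f : A} {m : ℕ} (f_deg : f ∈ 𝒜 m) (hm : 0 < m) :
    IsCompact (basicOpen 𝒜 f : Set (Proj 𝒜)) := by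
  rw [← opensRange_awayι 𝒜 f f_deg hm]
  exact isCompact_range (awayι 𝒜 f f_deg hm).continuous

theorem compactSpace_of_fg_span
    (hfg : (Ideal.span {x : A | ∃ n : ℕ, 0 < n ∧ x ∈ 𝒜 n}).FG) :
    CompactSpace (Proj 𝒜) := by
  obtain ⟨s, hs, hspan⟩ := (Submodule.fg_span_iff_fg_span_finset_subset _).mp hfg
  have hcover := iSup_basicOpen_eq_top 𝒜 ((↑) : s → A) (by
    rw [HomogeneousIdeal.toIdeal_irrelevant_eq_span_setOf, Subtype.range_coe]
    exact hspan.le)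
  rw [← isCompact_univ_iff, ← TopologicalSpace.Opens.coe_top, ← hcover,
    TopologicalSpace.Opens.coe_iSup]
  exact isCompact_iUnion fun f ↦
    let ⟨_, hm, f_deg⟩ := hs f.2
    isCompact_basicOpen 𝒜 f_deg hm

theorem spectralSpace_of_fg_span
    (hfg : (Ideal.span {x : A | ∃ n : ℕ, 0 < n ∧ x ∈ 𝒜 n}).FG) :
    SpectralSpace (Proj 𝒜) :=
  have := compactSpace_of_fg_span 𝒜 hfg
  {}

end AlgebraicGeometry.Proj

theorem projectiveSpectrum_spectralSpace {R A : Type*}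
    [CommRing R] [CommRing A] [Algebra R A]
    (𝒜 : ℕ → Submodule R A) [GradedAlgebra 𝒜]
    (hfg : (Ideal.span {x : A | ∃ n : ℕ, 0 < n ∧ x ∈ 𝒜 n}).FG) :
    T0Space (ProjectiveSpectrum 𝒜) ∧
    CompactSpace (ProjectiveSpectrum 𝒜) ∧
    (∀ U V : Set (ProjectiveSpectrum 𝒜),
      IsOpen U → IsCompact U → IsOpen V → IsCompact V → IsCompact (U ∩ V)) ∧
    TopologicalSpace.IsTopologicalBasis
      {U : Set (ProjectiveSpectrum 𝒜) | IsOpen U ∧ IsCompact U} ∧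
    QuasiSober (ProjectiveSpectrum 𝒜) := by
  have : SpectralSpace (ProjectiveSpectrum 𝒜) :=
    AlgebraicGeometry.Proj.spectralSpace_of_fg_span 𝒜 hfg
  exact ⟨inferInstance, inferInstance, fun U V hU hUc hV hVc ↦
    QuasiSeparatedSpace.inter_isCompact U V hU hUc hV hVc,
    PrespectralSpace.isTopologicalBasis, inferInstance⟩
end
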